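/- arXiv:2312.05945 — 5 statements merged into one kernel-verified Lean document; each statement's English description precedes it below -/
import Mathlib

section
/- If G is a simple graph, e is an edge of G with endpoint x, chi(G) = k+1 and chi(G - e) = k, and 3 <= r <= k, then G - e contains at least (1/2) * prod_{i=1}^{r-1} (k - i) cycles of length congruent to 0 mod r. -/
open SimpleGraph
open scoped Classical

/-!
Fix a `k`-colouring `c` of `G - xy`; as `χ(G) = k + 1`, every such colouring gives `x` and `y`
the same colour. For an injective `q : ℤ/r → colours` with `q 0 = c x`, call `u → v` a pattern
step if `c u = q i` and `c v = q (i + 1)` for some `i`. If there were no pattern walk from `x` to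
`y`, shifting the colours `q i ↦ q (i - 1)` on the vertices having a pattern walk to `y` would give
a `k`-colouring of `G - xy` separating `x` and `y`. Applied to `q` and to its reverse, this gives a
closed pattern walk through `x`, hence a cycle whose length is divisible by `r` and whose edge
colours are exactly the pairs `{q i, q (i + 1)}`. These pairs determine `q` up to reversal, so the
`(k - 1)(k - 2)⋯(k - r + 1)` choices of `q` yield at least half as many distinct cycles.
-/

/-- `H` is a cycle subgraph of `G`: its vertices and edges are those of some cycle walk. -/
def IsCycleSubgraph {V : Type*} (G : SimpleGraph V) (H : G.Subgraph) : Prop :=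
  ∃ (v : V) (w : G.Walk v v), w.IsCycle ∧
    H.verts = {x | x ∈ w.support} ∧ H.edgeSet = {e | e ∈ w.edges}

/-- The set of cycle subgraphs of `G` whose length (number of edges) is `m` mod `r`. -/
def modCycles {V : Type*} (G : SimpleGraph V) (r m : ℕ) : Set G.Subgraph :=
  {H | IsCycleSubgraph G H ∧ H.edgeSet.ncard % r = m}

/-- `G` is `k`-critical: `χ(G) = k` and every proper subgraph is `(k-1)`-colorable. -/
def IsCritical {V : Type*} [Fintype V] (G : SimpleGraph V) (k : ℕ) : Prop :=
  G.chromaticNumber = (k : ℕ∞) ∧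
    ∀ H : G.Subgraph, H ≠ ⊤ → H.coe.Colorable (k - 1)

section Pattern

variable {α : Type*} {r : ℕ}

def patternEdges (q : ZMod r ↪ α) : Set (Sym2 α) :=
  Set.range fun i => s(q i, q (i + 1))

def patternReverse (q : ZMod r ↪ α) : ZMod r ↪ α :=
  (Equiv.neg (ZMod r)).toEmbedding.trans q

@[simp]
lemma patternReverse_apply (q : ZMod r ↪ α) (i : ZMod r) : patternReverse q i = q (-i) := rfl

@[simp]
lemma patternReverse_patternReverse (q : ZMod r ↪ α) : patternReverse (patternReverse q) = q := by
  ext; simp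

lemma patternEdges_patternReverse_subset (q : ZMod r ↪ α) :
    patternEdges (patternReverse q) ⊆ patternEdges q := by
  rintro _ ⟨i, rfl⟩
  refine ⟨-i - 1, ?_⟩
  simp only [patternReverse_apply, sub_add_cancel, neg_add']
  exact Sym2.eq_swap

lemma patternEdges_patternReverse (q : ZMod r ↪ α) :
    patternEdges (patternReverse q) = patternEdges q := by
  refine (patternEdges_patternReverse_subset q).antisymm ?_
  simpa using patternEdges_patternReverse_subset (patternReverse q)

lemma eq_of_patternEdges_subset (hr : 3 ≤ r) {q q' : ZMod r ↪ α} (h0 : q' 0 = q 0)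
    (h1 : q' 1 = q 1) (h : patternEdges q' ⊆ patternEdges q) : q' = q := by
  have : NeZero r := ⟨by omega⟩
  have hr2 : (2 : ZMod r) ≠ 0 := by
    intro h2
    have := Nat.le_of_dvd two_pos ((ZMod.natCast_eq_zero_iff 2 r).mp (by exact_mod_cast h2))
    omega
  have step : ∀ n : ℕ, q' n = q n ∧ q' (n + 1) = q (n + 1) := by
    intro n
    induction n with
    | zero => simpa using ⟨h0, h1⟩
    | succ n ih =>
      push_cast
      refine ⟨ih.2, ?_⟩
      obtain ⟨j, hj⟩ := h ⟨(n : ZMod r) + 1, rfl⟩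
      rcases Sym2.eq_iff.mp hj with ⟨hj₁, hj₂⟩ | ⟨hj₁, hj₂⟩
      · rw [← hj₂, q.injective (hj₁.trans ih.2)]
      · -- here `q'` would turn back: `q' (n + 2) = q' n`
        have hjn : j = n := add_right_cancel (q.injective (hj₂.trans ih.2))
        rw [hjn, ← ih.1] at hj₁
        refine absurd (q'.injective hj₁) fun hn => hr2 ?_
        linear_combination -hn
  ext i
  simpa using (step i.val).1

lemma eq_or_eq_patternReverse_of_patternEdges_subset (hr : 3 ≤ r) {q q' : ZMod r ↪ α}
    (h0 : q' 0 = q 0) (h : patternEdges q' ⊆ patternEdges q) :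
    q' = q ∨ q' = patternReverse q := by
  obtain ⟨j, hj⟩ := h ⟨0, rfl⟩
  rcases Sym2.eq_iff.mp hj with ⟨hj₁, hj₂⟩ | ⟨hj₁, hj₂⟩
  · rw [q.injective (hj₁.trans h0), zero_add] at hj₂
    exact .inl (eq_of_patternEdges_subset hr h0 (by simpa using hj₂.symm) h)
  · have hj : j = -1 := eq_neg_of_add_eq_zero_left (q.injective (hj₂.trans h0))
    rw [hj] at hj₁
    refine .inr (eq_of_patternEdges_subset hr (by simpa using h0) (by simpa using hj₁.symm) ?_)
    rwa [patternEdges_patternReverse]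

end Pattern

section PatternWalk

variable {V α : Type*} {r : ℕ} {G : SimpleGraph V}

def PatternStep (c : V → α) (q : ZMod r ↪ α) (u v : V) : Prop :=
  ∃ i, c u = q i ∧ c v = q (i + 1)

lemma patternStep_patternReverse {c : V → α} {q : ZMod r ↪ α} {u v : V} :
    PatternStep c (patternReverse q) u v ↔ PatternStep c q v u := by
  constructor
  · rintro ⟨i, hu, hv⟩
    exact ⟨-(i + 1), by simpa using hv, by simpa using hu⟩
  · rintro ⟨i, hv, hu⟩
    exact ⟨-(i + 1), by simpa using hu, by simpa using hv⟩

lemma PatternStep.right_eq {c : V → α} {q : ZMod r ↪ α} {u v : V} (h : PatternStep c q u v)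
    {i : ZMod r} (hu : c u = q i) : c v = q (i + 1) := by
  obtain ⟨j, hj, hv⟩ := h
  rwa [q.injective (hj.symm.trans hu)] at hv

lemma SimpleGraph.Coloring.apply_eq_of_not_colorable {x y : V} {n : ℕ} (hG : ¬ G.Colorable n)
    (c : (G.deleteEdges {s(x, y)}).Coloring (Fin n)) : c x = c y := by
  by_contra hne
  refine hG ⟨Coloring.mk c fun {a b} hab => ?_⟩
  by_cases hab' : s(a, b) = s(x, y)
  · rcases Sym2.eq_iff.mp hab' with ⟨rfl, rfl⟩ | ⟨rfl, rfl⟩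
    exacts [hne, Ne.symm hne]
  · exact c.valid ((deleteEdges_adj ..).2 ⟨hab, hab'⟩)

theorem reflTransGen_patternStep_of_forall_coloring_eq (hr : 1 < r) (c : G.Coloring α)
    (q : ZMod r ↪ α) {x y : V} (hx : c x = q 0) (hforced : ∀ c' : G.Coloring α, c' x = c' y) :
    Relation.ReflTransGen (fun a b => G.Adj a b ∧ PatternStep c q a b) x y := by
  have : Fact (1 < r) := ⟨hr⟩
  set S := fun v => Relation.ReflTransGen (fun a b => G.Adj a b ∧ PatternStep c q a b) v y
  by_contra hxS
  have hy : c y = q 0 := (hforced c).symm.trans hx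
  let σ := (Equiv.addRight (-1 : ZMod r)).viaEmbedding q
  have hσ (i : ZMod r) : σ (q i) = q (i - 1) := by
    simp [σ, Equiv.Perm.viaEmbedding_apply, sub_eq_add_neg]
  have hboundary {a b : V} (hab : G.Adj a b) (ha : S a) (hb : ¬ S b) : σ (c a) ≠ c b := by
    intro h
    obtain ⟨i, hi⟩ : ∃ i, c a = q i := by
      rcases ha.cases_head with rfl | ⟨_, ⟨-, i, hi, -⟩, -⟩
      exacts [⟨0, hy⟩, ⟨i, hi⟩]
    rw [hi, hσ] at h
    exact hb (.head ⟨hab.symm, i - 1, h.symm, by rw [sub_add_cancel, hi]⟩ ha)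
  let c' : G.Coloring α := Coloring.mk (fun v => if S v then σ (c v) else c v) fun {a b} hab => by
    by_cases ha : S a <;> by_cases hb : S b <;> simp only [ha, hb, if_true, if_false]
    · exact fun h => c.valid hab (σ.injective h)
    · exact hboundary hab ha hb
    · exact (hboundary hab.symm hb ha).symm
    · exact c.valid hab
  have hc'x : c' x = q 0 := by
    change (if S x then _ else _) = _
    rw [if_neg hxS, hx]
  have hc'y : c' y = q (0 - 1) := by
    change (if S y then _ else _) = _
    rw [if_pos .refl, hy, hσ]
  simpa using q.injective (hc'x.symm.trans ((hforced c').trans hc'y))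

end PatternWalk

lemma SimpleGraph.Walk.IsTrail.ncard_edgeSet {V : Type*} {G : SimpleGraph V} {u v : V}
    {w : G.Walk u v} (h : w.IsTrail) : w.edgeSet.ncard = w.length := by
  rw [Walk.edgeSet, ← List.coe_toFinset, Set.ncard_coe_finset,
    List.toFinset_card_of_nodup h.edges_nodup, Walk.length_edges]

section PatternCycle

variable {V α : Type*} {r : ℕ} {G : SimpleGraph V} {c : V → α} {q : ZMod r ↪ α}

lemma exists_walk_of_reflTransGen {P : V → V → Prop} {u v : V}
    (h : Relation.ReflTransGen (fun a b => G.Adj a b ∧ P a b) u v) :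
    ∃ w : G.Walk u v, ∀ d ∈ w.darts, P d.fst d.snd := by
  induction h using Relation.ReflTransGen.head_induction_on with
  | refl => exact ⟨.nil, by simp⟩
  | head hab _ ih =>
    obtain ⟨w, hw⟩ := ih
    exact ⟨.cons hab.1 w, by simpa [hab.2] using hw⟩

lemma apply_end_eq_add_length {u v : V} {w : G.Walk u v}
    (hw : ∀ d ∈ w.darts, PatternStep c q d.fst d.snd) {i : ZMod r} (hu : c u = q i) :
    c v = q (i + w.length) := by
  induction w generalizing i with
  | nil => simpa using hu
  | cons h p ih =>
    rw [Walk.darts_cons, List.forall_mem_cons] at hw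
    rw [ih hw.2 (hw.1.right_eq hu), Walk.length_cons]
    push_cast
    ring_nf

lemma exists_dart_apply_fst_eq {u v : V} {w : G.Walk u v}
    (hw : ∀ d ∈ w.darts, PatternStep c q d.fst d.snd) {i : ZMod r} (hu : c u = q i) {n : ℕ}
    (hn : n < w.length) : ∃ d ∈ w.darts, c d.fst = q (i + n) := by
  induction w generalizing i n with
  | nil => simp at hn
  | cons h p ih =>
    rw [Walk.darts_cons, List.forall_mem_cons] at hw
    cases n with
    | zero => exact ⟨_, List.mem_cons_self .., by simpa using hu⟩
    | succ n =>
      obtain ⟨d, hd, hdc⟩ := ih hw.2 (hw.1.right_eq hu) (n := n) (by simpa using hn)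
      refine ⟨d, List.mem_cons_of_mem _ hd, ?_⟩
      rw [hdc]
      push_cast
      ring_nf

lemma image_edgeSet_eq_patternEdges [NeZero r] {u : V} {w : G.Walk u u}
    (hw : ∀ d ∈ w.darts, PatternStep c q d.fst d.snd) (hr : r ≤ w.length) :
    Sym2.map c '' w.edgeSet = patternEdges q := by
  apply subset_antisymm
  · rintro _ ⟨e, he, rfl⟩
    obtain ⟨d, hd, rfl⟩ := List.mem_map.mp he
    obtain ⟨i, h1, h2⟩ := hw d hd
    exact ⟨i, by simp [Dart.edge, h1, h2]⟩
  · rintro _ ⟨j, rfl⟩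
    obtain ⟨i, hu⟩ : ∃ i, c u = q i := by
      cases w with
      | nil => exact absurd hr (by simp [NeZero.ne r])
      | cons h p => exact (hw _ List.mem_cons_self).imp fun _ h => h.1
    obtain ⟨d, hd, hdc⟩ :=
      exists_dart_apply_fst_eq hw hu ((ZMod.val_lt (j - i)).trans_le hr)
    rw [ZMod.natCast_zmod_val, add_sub_cancel] at hdc
    refine ⟨d.edge, List.mem_map_of_mem hd, ?_⟩
    simp [Dart.edge, hdc, (hw d hd).right_eq hdc]

lemma exists_isCycle_of_patternStep (hr : 3 ≤ r) {u v : V} (huv : G.Adj u v)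
    (hstep : PatternStep c q u v)
    (hvu : Relation.ReflTransGen (fun a b => G.Adj a b ∧ PatternStep c q a b) v u) :
    ∃ w : G.Walk u u, w.IsCycle ∧ (∀ d ∈ w.darts, PatternStep c q d.fst d.snd) ∧ r ∣ w.length := by
  obtain ⟨p, hp⟩ := exists_walk_of_reflTransGen hvu
  have hw : ∀ d ∈ (Walk.cons huv p.bypass).darts, PatternStep c q d.fst d.snd := by
    simpa [Walk.darts_cons, hstep] using fun d hd => hp d (p.darts_bypass_subset_darts hd)
  have hdvd : r ∣ (Walk.cons huv p.bypass).length := by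
    obtain ⟨i, hi, -⟩ := hstep
    have hlen := apply_end_eq_add_length hw hi
    rw [hi] at hlen
    exact (ZMod.natCast_eq_zero_iff _ _).mp (left_eq_add.mp (q.injective hlen))
  refine ⟨_, (Walk.cons_isCycle_iff _ _).mpr ⟨p.bypass_isPath, fun he => ?_⟩, hw, hdvd⟩
  rw [Walk.length_cons, p.bypass_isPath.length_eq_one_of_mem_edges (Sym2.eq_swap ▸ he)] at hdvd
  exact absurd (Nat.le_of_dvd two_pos hdvd) (by omega)

theorem exists_mem_modCycles_image_edgeSet_eq (hr : 3 ≤ r) (c : G.Coloring α) (q : ZMod r ↪ α)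
    {x y : V} (hxy : x ≠ y) (hx : c x = q 0) (hforced : ∀ c' : G.Coloring α, c' x = c' y) :
    ∃ H ∈ modCycles G r 0, Sym2.map c '' H.edgeSet = patternEdges q := by
  have : NeZero r := ⟨by omega⟩
  have hxy' := reflTransGen_patternStep_of_forall_coloring_eq (by omega) c q hx hforced
  have hyx : Relation.ReflTransGen (fun a b => G.Adj a b ∧ PatternStep c q a b) y x := by
    rw [← Relation.reflTransGen_swap]
    refine Relation.ReflTransGen.mono (fun a b hab => ?_) _ _
      (reflTransGen_patternStep_of_forall_coloring_eq (by omega) c (patternReverse q)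
        (by simpa using hx) hforced)
    exact ⟨hab.1.symm, patternStep_patternReverse.mp hab.2⟩
  obtain ⟨v, ⟨hxv, hstep⟩, hvy⟩ := hxy'.cases_head.resolve_left hxy
  obtain ⟨w, hcyc, hw, hdvd⟩ := exists_isCycle_of_patternStep hr hxv hstep (hvy.trans hyx)
  refine ⟨w.toSubgraph, ⟨⟨x, w, hcyc, w.verts_toSubgraph, w.edgeSet_toSubgraph⟩, ?_⟩, ?_⟩
  · rw [w.edgeSet_toSubgraph, hcyc.isTrail.ncard_edgeSet, Nat.mod_eq_zero_of_dvd hdvd]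
  · rw [w.edgeSet_toSubgraph]
    have hlen := hcyc.three_le_length
    exact image_edgeSet_eq_patternEdges hw (Nat.le_of_dvd (by omega) hdvd)

end PatternCycle

lemma Fintype.card_mul_card_embedding_apply_eq {ι β : Type*} [Fintype ι] [Fintype β]
    [DecidableEq β] (i : ι) (b : β) :
    Fintype.card β * Fintype.card {f : ι ↪ β // f i = b} =
      (Fintype.card β).descFactorial (Fintype.card ι) := by
  have hfiber (b' : β) :
      Fintype.card {f : ι ↪ β // f i = b'} = Fintype.card {f : ι ↪ β // f i = b} :=
    Fintype.card_congr <| (Equiv.embeddingCongr (.refl ι) (Equiv.swap b' b)).subtypeEquiv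
      fun f => by simp [Equiv.swap_apply_eq_iff]
  rw [← Fintype.card_embedding_eq,
    Fintype.card_congr (Equiv.sigmaFiberEquiv fun f : ι ↪ β => f i).symm, Fintype.card_sigma,
    Finset.sum_congr rfl fun b' _ => hfiber b', Finset.sum_const, Finset.card_univ, smul_eq_mul]

lemma prod_Icc_succ_sub_eq_descFactorial (n m : ℕ) :
    ∏ i ∈ Finset.Icc 1 m, (n + 1 - i) = n.descFactorial m := by
  induction m with
  | zero => simp
  | succ m ih =>
    rw [Finset.prod_Icc_succ_top (by omega), ih, Nat.descFactorial_succ, mul_comm]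
    congr 1
    omega

lemma card_zmod_embedding_apply_zero_eq {k r : ℕ} [NeZero r] (a : Fin k) :
    Fintype.card {q : ZMod r ↪ Fin k // q 0 = a} = ∏ i ∈ Finset.Icc 1 (r - 1), (k - i) := by
  obtain ⟨n, rfl⟩ : ∃ n, k = n + 1 := ⟨k - 1, by have := a.pos; omega⟩
  obtain ⟨m, rfl⟩ : ∃ m, r = m + 1 := ⟨r - 1, by have := NeZero.pos r; omega⟩
  have h := Fintype.card_mul_card_embedding_apply_eq (0 : ZMod (m + 1)) a
  rw [Fintype.card_fin, ZMod.card, Nat.succ_descFactorial_succ] at h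
  rw [Nat.add_sub_cancel, prod_Icc_succ_sub_eq_descFactorial]
  exact Nat.eq_of_mul_eq_mul_left n.succ_pos h

lemma card_le_two_mul_ncard {ι β : Type*} [Fintype ι] [DecidableEq β] {t : Set β}
    (ht : t.Finite) (f : ι → β) (hf : ∀ i, f i ∈ t) (g : ι → ι)
    (hfg : ∀ i j, f j = f i → j = i ∨ j = g i) : Fintype.card ι ≤ 2 * t.ncard := by
  have hfiber : ∀ b ∈ Finset.univ.image f, (Finset.univ.filter fun i => f i = b).card ≤ 2 := by
    intro b hb
    obtain ⟨i, -, rfl⟩ := Finset.mem_image.mp hb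
    refine (Finset.card_le_card fun j hj => ?_).trans (Finset.card_le_two (a := i) (b := g i))
    simpa using hfg i j (Finset.mem_filter.mp hj).2
  calc Fintype.card ι ≤ 2 * (Finset.univ.image f).card := Finset.card_le_mul_card_image _ 2 hfiber
    _ ≤ 2 * t.ncard := by
      rw [← Set.ncard_coe_finset]
      exact Nat.mul_le_mul_left 2 (Set.ncard_le_ncard (by simpa [Set.subset_def] using hf) ht)

theorem stmt1_general {V : Type*} [Fintype V] (G : SimpleGraph V) (k r : ℕ)
    (hr : 3 ≤ r) (e : Sym2 V) (x : V)
    (he : e ∈ G.edgeSet) (hx : x ∈ e)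
    (hχ : G.chromaticNumber = (k : ℕ∞) + 1)
    (hχe : (G.deleteEdges {e}).chromaticNumber = (k : ℕ∞)) :
    (∏ i ∈ Finset.Icc 1 (r - 1), (k - i)) / 2 ≤
      (modCycles (G.deleteEdges {e}) r 0).ncard := by
  have : NeZero r := ⟨by omega⟩
  obtain ⟨y, rfl⟩ := Sym2.mem_iff_exists.mp hx
  have hG : ¬ G.Colorable k := fun hk => by
    have := hk.chromaticNumber_le
    rw [hχ] at this
    norm_cast at this
    omega
  obtain ⟨c⟩ : (G.deleteEdges {s(x, y)}).Colorable k := chromaticNumber_le_iff_colorable.mp hχe.le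
  choose H hHmem hHedges using fun q : {q : ZMod r ↪ Fin k // q 0 = c x} =>
    exists_mem_modCycles_image_edgeSet_eq hr c q.1 (G.ne_of_adj he) q.2.symm
      (Coloring.apply_eq_of_not_colorable hG)
  rw [← card_zmod_embedding_apply_zero_eq (c x)]
  refine Nat.div_le_of_le_mul (card_le_two_mul_ncard (Set.toFinite _) H hHmem
    (fun q => ⟨patternReverse q.1, by simpa using q.2⟩) fun q q' hq => ?_)
  have hsub : patternEdges q'.1 ⊆ patternEdges q.1 := by rw [← hHedges, ← hHedges, hq]
  simpa [Subtype.ext_iff] using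
    eq_or_eq_patternReverse_of_patternEdges_subset hr (q'.2.trans q.2.symm) hsub

/-- If `χ(G) = k+1`, `χ(G - e) = k` and `3 ≤ r ≤ k`, then `G - e` contains at least
`(1/2)·∏_{i=1}^{r-1}(k-i)` cycles of length `0 mod r`. -/
theorem stmt1 {V : Type*} [Fintype V] (G : SimpleGraph V) (k r : ℕ)
    (hr : 3 ≤ r) (hrk : r ≤ k) (e : Sym2 V) (x : V)
    (he : e ∈ G.edgeSet) (hx : x ∈ e)
    (hχ : G.chromaticNumber = (k : ℕ∞) + 1)
    (hχe : (G.deleteEdges {e}).chromaticNumber = (k : ℕ∞)) :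
    (∏ i ∈ Finset.Icc 1 (r - 1), (k - i)) / 2 ≤
      (modCycles (G.deleteEdges {e}) r 0).ncard :=
  stmt1_general G k r hr e x he hx hχ hχe
end

section
/- Let k >= 3, let G be a (k+1)-critical graph with minimum degree k, let v be a vertex of degree k with neighbors v_1,...,v_k, let phi be a proper k-coloring of G - v with phi(v_i) = i for each i, and let sigma be a cyclic r-permutation of r colors from {1,...,k} (3 <= r <= k). Then for each color i appearing in sigma, the sigma-subdigraph of G - v under phi contains a directed path from v_i to v_{sigma^{-1}(i)}. -/
open SimpleGraph
open scoped Classical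

/-- In a `(k+1)`-critical graph of minimum degree `k`, with `v` of degree `k`,
neighbors `vs i` colored `i` by a proper `k`-coloring `φ` of `G - v`, and `σ` a cyclic
`r`-permutation of colors, the `σ`-subdigraph of `G - v` contains a directed path
from `vs i` to `vs (σ⁻¹ i)` for each color `i` in `σ`. -/
theorem stmt2 {V : Type*} [Fintype V] [DecidableEq V] (G : SimpleGraph V)
    [DecidableRel G.Adj] (k r : ℕ) (hk : 3 ≤ k) (hr : 3 ≤ r) (hrk : r ≤ k)
    (hG : IsCritical G (k + 1)) (hδ : G.minDegree = k)
    (v : V) (hv : G.degree v = k)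
    (vs : Fin k → V) (hinj : Function.Injective vs) (hnbr : ∀ i, G.Adj v (vs i))
    (φ : V → Fin k)
    (hφ : ∀ a b, G.Adj a b → a ≠ v → b ≠ v → φ a ≠ φ b)
    (hφi : ∀ i, φ (vs i) = i)
    (σ : Equiv.Perm (Fin k)) (hσ : σ.IsCycle) (hσr : σ.support.card = r)
    (i : Fin k) (hi : i ∈ σ.support) :
    Relation.ReflTransGen
      (fun a b => G.Adj a b ∧ a ≠ v ∧ b ≠ v ∧ σ (φ a) = φ b)
      (vs i) (vs (σ⁻¹ i)) := by

  by_contra hpath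
  set step : V → V → Prop := fun a b => G.Adj a b ∧ a ≠ v ∧ b ≠ v ∧ σ (φ a) = φ b with hstep
  set A : Set V := {x | Relation.ReflTransGen step (vs i) x} with hA
  have hviA : vs i ∈ A := Relation.ReflTransGen.refl
  have hAne : ∀ x ∈ A, x ≠ v := by
    intro x hx
    induction hx with
    | refl => exact fun h => (G.ne_of_adj (hnbr i)).symm h
    | tail _ hlast ih => exact hlast.2.2.1
  -- neighbors of v are exactly the `vs j`
  have himg : Finset.univ.image vs ⊆ G.neighborFinset v := by
    intro x hx
    simp only [Finset.mem_image, Finset.mem_univ, true_and] at hx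
    obtain ⟨j, rfl⟩ := hx
    exact (G.mem_neighborFinset v _).2 (hnbr j)
  have heq : Finset.univ.image vs = G.neighborFinset v := by
    apply Finset.eq_of_subset_of_card_le himg
    rw [Finset.card_image_of_injective _ hinj, Finset.card_univ, Fintype.card_fin]
    rw [G.card_neighborFinset_eq_degree, hv]
  have hnbrs : ∀ x, G.Adj v x → ∃ j, x = vs j := by
    intro x hx
    have : x ∈ Finset.univ.image vs := by
      rw [heq]; exact (G.mem_neighborFinset v x).2 hx
    simp only [Finset.mem_image, Finset.mem_univ, true_and] at this
    obtain ⟨j, rfl⟩ := this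
    exact ⟨j, rfl⟩
  -- the recoloring
  set φ' : V → Fin k := fun x => if x = v then i else if x ∈ A then σ (φ x) else φ x with hφ'
  have hφ'nb : ∀ j : Fin k, φ' (vs j) ≠ i := by
    intro j hj
    have hne : vs j ≠ v := (G.ne_of_adj (hnbr j)).symm
    simp only [hφ', hne, if_neg hne, hφi] at hj
    by_cases hmem : vs j ∈ A
    · rw [if_pos hmem] at hj
      have : j = σ⁻¹ i := by rw [← hj]; simp
      subst this
      exact hpath hmem
    · rw [if_neg hmem] at hj
      subst hj
      exact hmem hviA
  have key : ∀ a b, G.Adj a b → φ' a ≠ φ' b := by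
    intro a b hab
    by_cases hav : a = v
    · subst hav
      obtain ⟨j, rfl⟩ := hnbrs b hab
      intro h
      apply hφ'nb j
      rw [← h]
      simp only [hφ', if_pos rfl]
    · by_cases hbv : b = v
      · subst hbv
        obtain ⟨j, rfl⟩ := hnbrs a hab.symm
        intro h
        apply hφ'nb j
        simpa only [hφ', if_pos rfl] using h
      · by_cases haA : a ∈ A <;> by_cases hbA : b ∈ A
        · simp only [hφ', if_neg hav, if_neg hbv, if_pos haA, if_pos hbA]
          exact fun h => hφ a b hab hav hbv (σ.injective h)
        · simp only [hφ', if_neg hav, if_neg hbv, if_pos haA, if_neg hbA]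
          intro h
          exact hbA (Relation.ReflTransGen.tail haA ⟨hab, hAne a haA, hbv, h⟩)
        · simp only [hφ', if_neg hav, if_neg hbv, if_neg haA, if_pos hbA]
          intro h
          exact haA (Relation.ReflTransGen.tail hbA ⟨hab.symm, hAne b hbA, hav, h.symm⟩)
        · simp only [hφ', if_neg hav, if_neg hbv, if_neg haA, if_neg hbA]
          exact hφ a b hab hav hbv
  have hcol : G.Colorable k := ⟨SimpleGraph.Coloring.mk φ' (fun {a b} h => key a b h)⟩
  have hle := hcol.chromaticNumber_le
  rw [hG.1] at hle
  exact absurd (Nat.cast_le.mp hle) (by omega)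
end

section
/- Let k >= 3, let G be a (k+1)-critical graph, and let v be any vertex of G. Then G contains at least k!/2 distinct cycles of length congruent to 1 mod k, each of which passes through v. -/
open SimpleGraph
open scoped Classical

/-!
Fix a proper `k`-colouring `c` of `G - v`, which exists by criticality. For an ordering `σ` of
the colours, label each `x ≠ v` by the position `σ⁻¹ (c x)` of its colour and label `v` by `-1`.
Let `S` be the set of vertices reached from `v` by walks on which the label rises by one at every
step. Adding one to the labels on `S` would give a proper `k`-colouring of `G`, unless some
neighbour of `v` in `S` has label `-1`. Hence there is a path from `v` with labels
`-1, 0, 1, …, -1` ending at a neighbour of `v`: a cycle through `v` of length `1 mod k`.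
Its first `k` steps after `v` meet the colours in the order `σ`, while every edge of it away from
`v` joins colours adjacent in the cyclic order `σ`; this pins down `σ` up to reversal, so the
`k!` orderings give at least `k!/2` distinct cycles.
-/

namespace ZMod

variable {k : ℕ}

lemma two_ne_zero_of_three_le (hk : 3 ≤ k) : (2 : ZMod k) ≠ 0 := by
  intro h
  have := Nat.le_of_dvd two_pos ((natCast_eq_zero_iff 2 k).1 (by exact_mod_cast h))
  omega

theorem exists_eq_add_mul_of_injective (hk : 3 ≤ k) {ρ : ZMod k → ZMod k}
    (hρ : Function.Injective ρ)
    (hstep : ∀ j : ℕ, j + 1 < k → ρ (j + 1) - ρ j = 1 ∨ ρ (j + 1) - ρ j = -1) :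
    ∃ ε : ZMod k, (ε = 1 ∨ ε = -1) ∧ ∀ j : ℕ, j < k → ρ j = ρ 0 + ε * j := by
  obtain ⟨ε, hε, hε1⟩ : ∃ ε : ZMod k, (ε = 1 ∨ ε = -1) ∧ ρ 1 = ρ 0 + ε :=
    ⟨ρ 1 - ρ 0, by simpa using hstep 0 (by omega), by ring⟩
  refine ⟨ε, hε, fun j => ?_⟩
  induction j using Nat.twoStepInduction with
  | zero => simp
  | one => exact fun _ => by simpa using hε1
  | more j ih ih1 =>
    intro hj
    have hj' := ih (by omega)
    have hj1 := ih1 (by omega)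
    push_cast at hj1 ⊢
    have hd : ρ (j + 2) - ρ (j + 1) = ε ∨ ρ (j + 2) - ρ (j + 1) = -ε := by
      have := hstep (j + 1) hj
      push_cast at this
      rw [show (j : ZMod k) + 1 + 1 = j + 2 by ring] at this
      rcases hε with rfl | rfl <;> simpa [or_comm] using this
    rcases hd with hd | hd
    · linear_combination hd + hj1
    · have hback : ρ (j + 2) = ρ j := by linear_combination hd + hj1 - hj'
      exact absurd (by linear_combination hρ hback) (two_ne_zero_of_three_le hk)

theorem perm_eq_one_or_eq_subLeft (hk : 3 ≤ k) (ρ : Equiv.Perm (ZMod k))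
    (hstep : ∀ j : ℕ, j + 1 < k → ρ (j + 1) - ρ j = 1 ∨ ρ (j + 1) - ρ j = -1)
    (h0 : ρ 0 = 0 ∨ ρ 0 = -1) (hlast : ρ (-1) = 0 ∨ ρ (-1) = -1) :
    ρ = 1 ∨ ρ = Equiv.subLeft (-1) := by
  have : NeZero k := ⟨by omega⟩
  obtain ⟨ε, hε, hρ⟩ := exists_eq_add_mul_of_injective hk ρ.injective hstep
  have hρ' (x : ZMod k) : ρ x = ρ 0 + ε * x := by
    simpa using hρ x.val (val_lt x)
  have h2 := two_ne_zero_of_three_le hk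
  have h1 : (1 : ZMod k) ≠ 0 := fun h => h2 (by linear_combination 2 * h)
  rw [hρ' (-1)] at hlast
  rcases hε with rfl | rfl
  · left
    have : ρ 0 = 0 := by
      rcases h0 with h0 | h0
      · exact h0
      · rw [h0] at hlast
        rcases hlast with h | h
        · exact absurd (by linear_combination -h) h2
        · exact absurd (by linear_combination -h) h1
    ext x
    simp [hρ' x, this]
  · right
    have : ρ 0 = -1 := by
      rcases h0 with h0 | h0
      · rw [h0] at hlast
        rcases hlast with h | h
        · exact absurd (by linear_combination h) h1
        · exact absurd (by linear_combination h) h2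
      · exact h0
    ext x
    simp [hρ' x, this]
    ring

end ZMod

namespace SimpleGraph.Walk

variable {V : Type*} {G : SimpleGraph V} {k : ℕ} {f : V → ZMod k} {u v w x y : V}

def IsAscending (f : V → ZMod k) (p : G.Walk u v) : Prop :=
  ∀ d ∈ p.darts, f d.snd = f d.fst + 1

lemma isAscending_nil : (nil : G.Walk u u).IsAscending f := by
  simp [IsAscending]

lemma IsAscending.concat {p : G.Walk u v} (hp : p.IsAscending f) (h : G.Adj v w)
    (hf : f w = f v + 1) : (p.concat h).IsAscending f := by
  intro d hd
  rw [darts_concat, List.concat_eq_append, List.mem_append, List.mem_singleton] at hd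
  rcases hd with hd | rfl
  exacts [hp d hd, hf]

lemma IsAscending.bypass [DecidableEq V] {p : G.Walk u v} (hp : p.IsAscending f) :
    p.bypass.IsAscending f :=
  fun d hd => hp d (p.darts_bypass_subset_darts hd)

lemma IsAscending.label_getVert {p : G.Walk u v} (hp : p.IsAscending f) {n : ℕ}
    (hn : n ≤ p.length) : f (p.getVert n) = f u + n := by
  induction p generalizing n with
  | nil => simp_all
  | cons h p ih =>
    rw [IsAscending, darts_cons, List.forall_mem_cons] at hp
    cases n with
    | zero => simp
    | succ n =>
      rw [getVert_cons_succ, ih hp.2 (by simpa using hn), hp.1]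
      push_cast
      ring

lemma IsAscending.sub_eq_of_mem_edges {p : G.Walk u v} (hp : p.IsAscending f)
    (he : s(x, y) ∈ p.edges) : f y - f x = 1 ∨ f y - f x = -1 := by
  obtain ⟨i, hi, hxy⟩ := p.mk_mem_edges_iff_exists.1 he
  have hi0 := hp.label_getVert hi.le
  have hi1 := hp.label_getVert (Nat.succ_le_of_lt hi)
  rcases Sym2.eq_iff.1 hxy with ⟨rfl, rfl⟩ | ⟨rfl, rfl⟩
  · left; rw [hi0, hi1]; push_cast; ring
  · right; rw [hi0, hi1]; push_cast; ring

lemma IsTrail.ncard_edgeSet_s6 {p : G.Walk u w} (hp : p.IsTrail) : p.edgeSet.ncard = p.length := by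
  rw [show p.edgeSet = (p.edges.toFinset : Set (Sym2 V)) by ext; simp [mem_edgeSet],
    Set.ncard_coe_finset, List.toFinset_card_of_nodup hp.edges_nodup, length_edges]

-- With an edge `w u`, such a path closes up to a cycle whose labels read `-1, 0, 1, …, -1`.
structure IsKempePath (f : V → ZMod k) (p : G.Walk u w) : Prop where
  isPath : p.IsPath
  isAscending : p.IsAscending f
  label_start : f u = -1
  label_end : f w = -1

namespace IsKempePath

variable {p : G.Walk u w}

lemma natCast_length (hp : p.IsKempePath f) : (p.length : ZMod k) = 0 := by
  have := hp.isAscending.label_getVert le_rfl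
  rw [getVert_length, hp.label_start, hp.label_end] at this
  linear_combination -this

lemma label_getVert (hp : p.IsKempePath f) {n : ℕ} (hn : n ≤ p.length) :
    f (p.getVert n) = n - 1 := by
  rw [hp.isAscending.label_getVert hn, hp.label_start]
  ring

lemma cons_isCycle [Fact (1 < k)] (hp : p.IsKempePath f) (h : G.Adj w u) : (cons h p).IsCycle := by
  refine (cons_isCycle_iff p h).2 ⟨hp.isPath, fun he => ?_⟩
  have := hp.isAscending.sub_eq_of_mem_edges he
  rw [hp.label_start, hp.label_end, sub_self] at this
  rcases this with h0 | h0
  · exact zero_ne_one h0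
  · exact one_ne_zero (neg_eq_zero.1 h0.symm)

lemma length_cons_mod [Fact (1 < k)] (hp : p.IsKempePath f) (h : G.Adj w u) :
    (cons h p).length % k = 1 := by
  obtain ⟨m, hm⟩ := (ZMod.natCast_eq_zero_iff _ _).1 hp.natCast_length
  rw [length_cons, hm, Nat.mul_add_mod, Nat.mod_eq_of_lt Fact.out]

lemma label_eq_of_mem_edges (hp : p.IsKempePath f) (h : G.Adj w u)
    (he : s(u, x) ∈ (cons h p).edges) : f x = 0 ∨ f x = -1 := by
  rw [edges_cons, List.mem_cons] at he
  rcases he with he | he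
  · right
    rcases Sym2.eq_iff.1 he with ⟨-, rfl⟩ | ⟨-, rfl⟩
    exacts [hp.label_start, hp.label_end]
  · obtain ⟨i, hi, hxy⟩ := p.mk_mem_edges_iff_exists.1 he
    rcases Sym2.eq_iff.1 hxy with ⟨hu, rfl⟩ | ⟨-, hu⟩
    · obtain rfl := (hp.isPath.getVert_eq_start_iff hi.le).1 hu
      left
      simpa using hp.label_getVert (Nat.succ_le_of_lt hi)
    · exact absurd ((hp.isPath.getVert_eq_start_iff hi).1 hu) (Nat.succ_ne_zero i)

lemma sub_eq_of_mem_edges (hp : p.IsKempePath f) (h : G.Adj w u) (hx : x ≠ u) (hy : y ≠ u)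
    (he : s(x, y) ∈ (cons h p).edges) : f y - f x = 1 ∨ f y - f x = -1 := by
  rw [edges_cons, List.mem_cons] at he
  rcases he with he | he
  · rcases Sym2.eq_iff.1 he with ⟨-, rfl⟩ | ⟨rfl, -⟩ <;> contradiction
  · exact hp.isAscending.sub_eq_of_mem_edges he

theorem perm_eq_one_or_eq_subLeft (hk : 3 ≤ k) (hp : p.IsKempePath f) {g : V → ZMod k}
    {ρ : Equiv.Perm (ZMod k)} (hfg : ∀ x, x ≠ u → f x = ρ (g x)) {w' : V} {q : G.Walk u w'}
    (hq : q.IsKempePath g) (h : G.Adj w u) (h' : G.Adj w' u)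
    (hE : ∀ e ∈ (cons h' q).edges, e ∈ (cons h p).edges) :
    ρ = 1 ∨ ρ = Equiv.subLeft (-1) := by
  have hlen : k ≤ q.length :=
    Nat.le_of_dvd (Nat.pos_of_ne_zero fun h0 => h'.ne (q.eq_of_length_eq_zero h0).symm)
      ((ZMod.natCast_eq_zero_iff _ _).1 hq.natCast_length)
  have hedge (n : ℕ) (hn : n < q.length) :
      s(q.getVert n, q.getVert (n + 1)) ∈ (cons h p).edges :=
    hE _ (List.mem_cons_of_mem _ (q.mk_mem_edges_iff_exists.2 ⟨n, hn, rfl⟩))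
  have hne (n : ℕ) (hn : n < q.length) : q.getVert (n + 1) ≠ u := fun heq =>
    Nat.succ_ne_zero n ((hq.isPath.getVert_eq_start_iff hn).1 heq)
  have hρ (n : ℕ) (hn : n < q.length) : f (q.getVert (n + 1)) = ρ n := by
    rw [hfg _ (hne n hn), hq.label_getVert hn]
    push_cast
    ring_nf
  apply ZMod.perm_eq_one_or_eq_subLeft hk
  · intro j hj
    have := hp.sub_eq_of_mem_edges h (hne j (by omega)) (hne (j + 1) (by omega))
      (hedge (j + 1) (by omega))
    rwa [hρ j (by omega), hρ (j + 1) (by omega), Nat.cast_succ] at this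
  · have := hp.label_eq_of_mem_edges h (x := q.getVert 1) (by simpa using hedge 0 (by omega))
    rwa [hρ 0 (by omega), Nat.cast_zero] at this
  · have := hp.label_eq_of_mem_edges h (x := w') (hE _ (by simp [edges_cons, Sym2.eq_swap]))
    rwa [hfg w' h'.ne, hq.label_end] at this

lemma toSubgraph_cons_mem [Fact (1 < k)] (hp : p.IsKempePath f) (h : G.Adj w u) :
    IsCycleSubgraph G (cons h p).toSubgraph ∧ (cons h p).toSubgraph.edgeSet.ncard % k = 1 ∧
      u ∈ (cons h p).toSubgraph.verts := by
  have hc := hp.cons_isCycle h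
  refine ⟨⟨w, _, hc, verts_toSubgraph _, edgeSet_toSubgraph _⟩, ?_, ?_⟩
  · rw [edgeSet_toSubgraph, hc.isTrail.ncard_edgeSet_s6, hp.length_cons_mod h]
  · simp

end IsKempePath

end SimpleGraph.Walk

namespace SimpleGraph

open Walk

variable {V : Type*} {G : SimpleGraph V} {k : ℕ} {f : V → ZMod k} {v : V}

theorem exists_isKempePath [NeZero k] (hG : ¬ G.Colorable k)
    (hf : ∀ ⦃x y⦄, G.Adj x y → x ≠ v → y ≠ v → f x ≠ f y) (hv : f v = -1) :
    ∃ w, ∃ _ : G.Adj w v, ∃ p : G.Walk v w, p.IsKempePath f := by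
  by_contra! hno
  set S := {x | ∃ p : G.Walk v x, p.IsAscending f}
  have hvS : v ∈ S := ⟨nil, isAscending_nil⟩
  have hstep : ∀ ⦃x y⦄, x ∈ S → G.Adj x y → f y = f x + 1 → y ∈ S := by
    rintro x y ⟨p, hp⟩ hxy hfxy
    exact ⟨p.concat hxy, hp.concat hxy hfxy⟩
  have hclosed : ∀ ⦃x⦄, x ∈ S → G.Adj x v → f x ≠ -1 := by
    rintro x ⟨p, hp⟩ hxv hx
    exact hno x hxv p.bypass ⟨p.bypass_isPath, hp.bypass, hv, hx⟩
  let f' : V → ZMod k := fun x => if x ∈ S then f x + 1 else f x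
  have hf' : ∀ {x y}, G.Adj x y → f' x ≠ f' y := by
    intro x y hxy heq
    by_cases hx : x ∈ S <;> by_cases hy : y ∈ S <;>
      simp only [f', hx, hy, if_true, if_false] at heq
    · have heq : f x = f y := add_right_cancel heq
      by_cases hxv : x = v
      · subst hxv
        exact hclosed hy hxy.symm (heq ▸ hv)
      by_cases hyv : y = v
      · subst hyv
        exact hclosed hx hxy (heq.symm ▸ hv)
      exact hf hxy hxv hyv heq
    · exact hy (hstep hx hxy heq.symm)
    · exact hx (hstep hy hxy.symm heq)
    · exact hf hxy (fun h => hx (h ▸ hvS)) (fun h => hy (h ▸ hvS)) heq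
  exact hG (by simpa using (Coloring.mk f' hf').colorable)

lemma IsCritical.not_colorable [Fintype V] (hG : IsCritical G (k + 1)) : ¬ G.Colorable k :=
  fun hc => by
    have := hG.1 ▸ hc.chromaticNumber_le
    norm_cast at this
    omega

lemma IsCritical.exists_labelling [Fintype V] [NeZero k] (hG : IsCritical G (k + 1)) (v : V) :
    ∃ c : V → ZMod k, ∀ ⦃x y⦄, G.Adj x y → x ≠ v → y ≠ v → c x ≠ c y := by
  have hdel : (⊤ : G.Subgraph).deleteVerts {v} ≠ ⊤ := fun h => by
    simpa using congrArg (v ∈ ·.verts) h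
  obtain ⟨C⟩ : ((⊤ : G.Subgraph).deleteVerts {v}).coe.Colorable k := hG.2 _ hdel
  refine ⟨fun x => if hx : x = v then 0 else ZMod.finEquiv k (C ⟨x, by simp [hx]⟩),
    fun x y hxy hx hy heq => ?_⟩
  simp only [hx, hy, dite_false] at heq
  exact C.valid (by simpa [hx, hy] using hxy) ((ZMod.finEquiv k).injective heq)

end SimpleGraph

lemma Fintype.card_div_two_le_ncard {α β : Type*} [Fintype α] (F : α → β) {s : Set β}
    (hs : s.Finite) (hF : ∀ a, F a ∈ s)
    (hfib : ∀ a, ∃ b, ∀ a', F a' = F a → a' = a ∨ a' = b) :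
    Fintype.card α / 2 ≤ s.ncard := by
  classical
  refine Nat.div_le_of_le_mul ?_
  rw [s.ncard_eq_toFinset_card hs, ← Finset.card_univ]
  refine Finset.card_le_mul_card_image_of_maps_to (fun a _ => hs.mem_toFinset.2 (hF a)) 2
    fun b _ => ?_
  by_cases hb : ∃ a, F a = b
  · obtain ⟨a, rfl⟩ := hb
    obtain ⟨a', ha'⟩ := hfib a
    refine (Finset.card_le_card (t := {a, a'}) fun x hx => ?_).trans Finset.card_le_two
    rcases ha' x (Finset.mem_filter.1 hx).2 with rfl | rfl <;> simp
  · simp only [not_exists] at hb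
    simp [hb]

open SimpleGraph Walk Nat in
/-- A `(k+1)`-critical graph has at least `k!/2` cycles of length `1 mod k`
through any given vertex `v`. -/
theorem stmt6 {V : Type*} [Fintype V] (G : SimpleGraph V) (k : ℕ) (hk : 3 ≤ k)
    (hG : IsCritical G (k + 1)) (v : V) :
    Nat.factorial k / 2 ≤
      {H : G.Subgraph | IsCycleSubgraph G H ∧ H.edgeSet.ncard % k = 1 ∧
        v ∈ H.verts}.ncard := by
  have : Fact (1 < k) := ⟨by omega⟩
  obtain ⟨c, hc⟩ := hG.exists_labelling v
  let f (σ : Equiv.Perm (ZMod k)) : V → ZMod k := Function.update (⇑σ⁻¹ ∘ c) v (-1)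
  have hf (σ : Equiv.Perm (ZMod k)) {x : V} (hx : x ≠ v) : f σ x = σ⁻¹ (c x) :=
    Function.update_of_ne hx _ _
  choose w h p hp using fun σ => exists_isKempePath hG.not_colorable (f := f σ)
    (fun x y hxy hx hy => by simpa [hf σ hx, hf σ hy] using hc hxy hx hy)
    (Function.update_self _ _ _)
  have hcard : Fintype.card (Equiv.Perm (ZMod k)) = k ! := by
    rw [Fintype.card_perm, ZMod.card]
  rw [← hcard]
  refine Fintype.card_div_two_le_ncard (fun σ => (cons (h σ) (p σ)).toSubgraph)
    (Set.toFinite _) (fun σ => (hp σ).toSubgraph_cons_mem (h σ))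
    fun σ => ⟨σ * Equiv.subLeft (-1), fun τ hτ => ?_⟩
  have hE := congrArg Subgraph.edgeSet hτ
  simp only [edgeSet_toSubgraph] at hE
  have := (hp σ).perm_eq_one_or_eq_subLeft hk (ρ := σ⁻¹ * τ)
    (fun x hx => by simp [hf σ hx, hf τ hx]) (hp τ) (h σ) (h τ)
    fun e he => (Set.ext_iff.1 hE e).1 he
  rwa [inv_mul_eq_one, inv_mul_eq_iff_eq_mul, eq_comm] at this
end

section
/- Let G be a graph with a proper k-coloring phi, let sigma be a cyclic permutation of r distinct colors from {1,...,k}, and let D_sigma be the sigma-subdigraph of G under phi. For a vertex v, let A_v be the set of vertices reachable from v by directed paths in D_sigma (including v). Then the coloring phi' defined by phi'(w) = sigma(phi(w)) for w in A_v and phi'(w) = phi(w) otherwise is a proper k-coloring of G. -/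
open SimpleGraph
open scoped Classical

/-- Kempe shift: shifting the colors, according to `σ`, of the set of vertices
reachable from `v` in the `σ`-subdigraph yields another proper coloring. -/
theorem stmt14 {V : Type*} (G : SimpleGraph V) (k r : ℕ) (φ : V → Fin k)
    (hφ : ∀ a b, G.Adj a b → φ a ≠ φ b)
    (σ : Equiv.Perm (Fin k)) (hσ : σ.IsCycle) (hσr : σ.support.card = r) (v : V) :
    ∀ a b, G.Adj a b →
      (if Relation.ReflTransGen (fun p q => G.Adj p q ∧ σ (φ p) = φ q) v a
        then σ (φ a) else φ a) ≠
      (if Relation.ReflTransGen (fun p q => G.Adj p q ∧ σ (φ p) = φ q) v b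
        then σ (φ b) else φ b) := by
  intro a b hab
  by_cases ha : Relation.ReflTransGen (fun p q => G.Adj p q ∧ σ (φ p) = φ q) v a <;>
    by_cases hb : Relation.ReflTransGen (fun p q => G.Adj p q ∧ σ (φ p) = φ q) v b <;>
      simp only [ha, hb, if_pos, if_neg, if_true, if_false]
  · exact fun h => hφ a b hab (σ.injective h)
  · intro h
    exact hb (ha.tail ⟨hab, h⟩)
  · intro h
    exact ha (hb.tail ⟨hab.symm, h.symm⟩)
  · exact hφ a b hab
end

section
/- Let G be a graph with chromatic number greater than k and suppose G has no cycle of length congruent to 1 mod k. Then a contradiction follows; equivalently, every graph with no cycle of length congruent to 1 modulo k is k-colorable. -/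
open SimpleGraph
open scoped Classical

/-! Colour every vertex by its depth in a depth-first search forest, modulo `k`. Every edge of
the graph joins a vertex to one of its ancestors, so an edge whose ends receive the same colour
closes up, with the tree path between its ends, a cycle whose length is a positive multiple of `k`
plus one. -/

section

variable {V : Type*} {G : SimpleGraph V}

theorem SimpleGraph.Walk.IsCycle.isCycleSubgraph_toSubgraph {v : V} {w : G.Walk v v}
    (hw : w.IsCycle) : IsCycleSubgraph G w.toSubgraph :=
  ⟨v, w, hw, w.verts_toSubgraph, w.edgeSet_toSubgraph⟩

theorem SimpleGraph.Walk.IsTrail.ncard_edgeSet_toSubgraph {u v : V} {w : G.Walk u v}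
    (hw : w.IsTrail) : w.toSubgraph.edgeSet.ncard = w.length := by
  rw [w.edgeSet_toSubgraph, ← w.coe_edges_toFinset, Set.ncard_coe_finset,
    List.toFinset_card_of_nodup hw.edges_nodup, w.length_edges]

theorem List.IsChain.exists_isPath_getElem_getLast {l : List V} (hc : l.IsChain G.Adj)
    (hn : l.Nodup) (i : ℕ) (hi : i < l.length) :
    ∃ p : G.Walk l[i] (l.getLast (List.ne_nil_of_length_pos (by omega))),
      p.IsPath ∧ p.length = l.length - 1 - i := by
  have hne : l.drop i ≠ [] := List.ne_nil_of_length_pos (by rw [List.length_drop]; omega)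
  refine ⟨(Walk.ofSupport _ hne (hc.drop i)).copy (List.head_drop ..) (List.getLast_drop ..),
    ?_, by rw [Walk.length_copy, Walk.length_ofSupport, List.length_drop]; omega⟩
  rw [Walk.isPath_copy, Walk.isPath_def, Walk.support_ofSupport]
  exact hn.sublist (List.drop_sublist i l)

/-- `d` is the depth function of a depth-first spanning forest on `S`: every edge joins a
vertex to an ancestor, and the tree path between them has length the difference of depths.
Adjacent vertices never have equal depth, since a path of length `0` is trivial. -/
def IsNormalDepthOn (G : SimpleGraph V) (S : Set V) (d : V → ℕ) : Prop :=
  ∀ ⦃u⦄, u ∈ S → ∀ ⦃v⦄, v ∈ S → G.Adj u v → d u ≤ d v →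
    ∃ p : G.Walk u v, p.IsPath ∧ p.length = d v - d u

theorem colorable_of_isNormalDepthOn_univ {k : ℕ} (hk : 2 ≤ k)
    (hcyc : ∀ (v : V) (c : G.Walk v v), c.IsCycle → c.length % k ≠ 1) {d : V → ℕ}
    (hd : IsNormalDepthOn G Set.univ d) : G.Colorable k := by
  refine ⟨Coloring.mk (fun v => ⟨d v % k, Nat.mod_lt _ (by omega)⟩) fun {u v} huv heq => ?_⟩
  replace heq : d u % k = d v % k := Fin.val_eq_of_eq heq
  wlog hle : d u ≤ d v generalizing u v
  · exact this huv.symm heq.symm (by omega)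
  obtain ⟨p, hp, hlen⟩ := hd trivial trivial huv hle
  obtain ⟨m, hm⟩ := (Nat.modEq_iff_dvd' hle).mp heq
  have hm0 : m ≠ 0 := by
    rintro rfl
    exact huv.ne (Walk.eq_of_length_eq_zero (p := p) (by omega))
  have hcycle : (Walk.cons huv.symm p).IsCycle := by
    refine (Walk.cons_isCycle_iff p huv.symm).mpr ⟨hp, fun he => ?_⟩
    have := hp.length_eq_one_of_mem_edges (Sym2.eq_swap ▸ he)
    have := Nat.le_mul_of_pos_right k (Nat.pos_of_ne_zero hm0)
    omega
  apply hcyc v _ hcycle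
  rw [Walk.length_cons, hlen, hm, Nat.mul_add_mod, Nat.mod_eq_of_lt (by omega)]

/-- A state of depth-first search: `S` is the set of visited vertices, `L` the stack, root
first, and `d` the depth. -/
structure IsDfsState (G : SimpleGraph V) (S : Finset V) (L : List V) (d : V → ℕ) : Prop where
  isChain : L.IsChain G.Adj
  nodup : L.Nodup
  mem_of_mem_stack : ∀ x ∈ L, x ∈ S
  depth_getElem : ∀ (i : ℕ) (hi : i < L.length), d L[i] = i
  isNormalDepthOn : IsNormalDepthOn G S d
  mem_stack_of_adj : ∀ v ∉ S, ∀ u ∈ S, G.Adj v u → u ∈ L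

namespace IsDfsState

variable {S : Finset V} {L : List V} {d : V → ℕ}

theorem empty (d : V → ℕ) : IsDfsState G ∅ [] d where
  isChain := List.isChain_nil
  nodup := List.nodup_nil
  mem_of_mem_stack := by simp
  depth_getElem := by simp
  isNormalDepthOn := by simp [IsNormalDepthOn]
  mem_stack_of_adj := by simp

theorem pop {t : V} (hs : IsDfsState G S (L ++ [t]) d) (ht : ∀ v ∉ S, ¬G.Adj t v) :
    IsDfsState G S L d where
  isChain := hs.isChain.prefix (List.prefix_append L [t])
  nodup := hs.nodup.sublist (List.sublist_append_left L [t])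
  mem_of_mem_stack x hx := hs.mem_of_mem_stack x (List.mem_append_left _ hx)
  depth_getElem i hi := by
    have := hs.depth_getElem i (by rw [List.length_append, List.length_singleton]; omega)
    rwa [List.getElem_append_left hi] at this
  isNormalDepthOn := hs.isNormalDepthOn
  mem_stack_of_adj v hv u hu hvu := by
    rcases List.mem_append.mp (hs.mem_stack_of_adj v hv u hu hvu) with h | h
    · exact h
    · rw [List.mem_singleton] at h
      exact absurd (h ▸ hvu.symm) (ht v hv)

theorem isNormalDepthOn_push {v : V} (hs : IsDfsState G S L d) (hv : v ∉ S)
    (hchain : (L ++ [v]).IsChain G.Adj) (hnodup : (L ++ [v]).Nodup) :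
    IsNormalDepthOn G ↑(insert v S) (Function.update d v L.length) := by
  have hstack : ∀ u ∈ S, G.Adj u v → ∃ (i : ℕ) (hi : i < L.length), L[i] = u :=
    fun u hu huv => List.mem_iff_getElem.mp (hs.mem_stack_of_adj v hv u hu huv.symm)
  have hne : ∀ u ∈ S, u ≠ v := fun u hu huv => hv (huv ▸ hu)
  intro u hu w hw huw hle
  rw [Finset.mem_coe, Finset.mem_insert] at hu hw
  rcases hu with rfl | hu <;> rcases hw with rfl | hw
  · exact absurd huw (G.irrefl)
  · obtain ⟨i, hi, rfl⟩ := hstack _ hw huw.symm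
    simp only [Function.update_self, Function.update_of_ne (hne _ hw), hs.depth_getElem] at hle
    omega
  · obtain ⟨i, hi, rfl⟩ := hstack _ hu huw
    obtain ⟨p, hp, hlen⟩ := hchain.exists_isPath_getElem_getLast hnodup i
      (by rw [List.length_append, List.length_singleton]; omega)
    refine ⟨p.copy (List.getElem_append_left hi) (List.getLast_append_singleton L),
      by simpa, ?_⟩
    simp [Function.update_of_ne (hne _ hu), hs.depth_getElem, hlen]
  · simp only [Function.update_of_ne (hne _ hu), Function.update_of_ne (hne _ hw)] at hle ⊢
    exact hs.isNormalDepthOn hu hw huw hle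

theorem push {v : V} (hs : IsDfsState G S L d) (hv : v ∉ S)
    (hadj : ∀ t ∈ L.getLast?, G.Adj t v) :
    IsDfsState G (insert v S) (L ++ [v]) (Function.update d v L.length) := by
  have hchain : (L ++ [v]).IsChain G.Adj :=
    List.isChain_append.mpr ⟨hs.isChain, List.isChain_singleton v, by simpa using hadj⟩
  have hvL : v ∉ L := fun h => hv (hs.mem_of_mem_stack v h)
  have hnodup : (L ++ [v]).Nodup := List.concat_eq_append ▸ hs.nodup.concat hvL
  refine ⟨hchain, hnodup, ?_, ?_, hs.isNormalDepthOn_push hv hchain hnodup, ?_⟩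
  · intro x hx
    rcases List.mem_append.mp hx with hx | hx
    · exact Finset.mem_insert_of_mem (hs.mem_of_mem_stack x hx)
    · rw [List.mem_singleton.mp hx]
      exact Finset.mem_insert_self v S
  · intro i hi
    rw [List.length_append, List.length_singleton] at hi
    rcases Nat.lt_succ_iff_lt_or_eq.mp hi with hi | rfl
    · have hne : L[i] ≠ v := fun h => hvL (h ▸ List.getElem_mem hi)
      rw [List.getElem_append_left hi, Function.update_of_ne hne, hs.depth_getElem]
    · simp
  · intro x hx u hu hxu
    rcases Finset.mem_insert.mp hu with rfl | hu
    · exact List.mem_append_right _ (List.mem_singleton_self u)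
    · exact List.mem_append_left _
        (hs.mem_stack_of_adj x (fun h => hx (Finset.mem_insert_of_mem h)) u hu hxu)

theorem exists_isNormalDepthOn_univ [Fintype V] {S : Finset V} {L : List V} {d : V → ℕ}
    (hs : IsDfsState G S L d) :
    ∃ d' : V → ℕ, IsNormalDepthOn G Set.univ d' := by
  by_cases hS : ∀ v, v ∈ S
  · exact ⟨d, fun u _ v _ => hs.isNormalDepthOn (hS u) (hS v)⟩
  push Not at hS
  obtain ⟨v, hv⟩ := hS
  rcases L.eq_nil_or_concat' with rfl | ⟨L₀, t, rfl⟩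
  · exact exists_isNormalDepthOn_univ (hs.push hv (by simp))
  · by_cases hpush : ∃ w ∉ S, G.Adj t w
    · obtain ⟨w, hw, htw⟩ := hpush
      exact exists_isNormalDepthOn_univ (hs.push hw (by simpa using htw))
    · push Not at hpush
      exact exists_isNormalDepthOn_univ (hs.pop hpush)
termination_by 2 * Sᶜ.card + L.length
decreasing_by
  all_goals
    subst_vars
    simp only [Finset.card_compl, List.length_append, List.length_cons, List.length_nil]
  · rw [Finset.card_insert_of_notMem hv]; have := Finset.card_lt_univ_of_notMem hv; omega
  · rw [Finset.card_insert_of_notMem hw]; have := Finset.card_lt_univ_of_notMem hw; omega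
  · omega

end IsDfsState

end

/-- Tuza's theorem: every graph with no cycle of length congruent to 1 mod `k`
is `k`-colorable. -/
theorem stmt19 {V : Type*} [Fintype V] (G : SimpleGraph V) (k : ℕ) (hk : 2 ≤ k)
    (h : ∀ H : G.Subgraph, IsCycleSubgraph G H → H.edgeSet.ncard % k ≠ 1) :
    G.Colorable k := by
  have hcyc (v : V) (c : G.Walk v v) (hc : c.IsCycle) : c.length % k ≠ 1 := by
    have := h _ hc.isCycleSubgraph_toSubgraph
    rwa [hc.isTrail.ncard_edgeSet_toSubgraph] at this
  obtain ⟨d, hd⟩ := (IsDfsState.empty (G := G) 0).exists_isNormalDepthOn_univ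
  exact colorable_of_isNormalDepthOn_univ hk hcyc hd
end
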